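/- The maps β_i of the matrix chain satisfy the braid relation: let G be a group and fix elements a, d ∈ G. Define F : G × G → G × G by F(x, y) = (a·x⁻¹·y, y) (the generator using the fixed left neighbour a) and H : G × G → G × G by H(x, y) = (x, x·y⁻¹·d) (the generator using the fixed right neighbour d). Then F ∘ H ∘ F = H ∘ F ∘ H, and both composites send (x, y) to (a·y⁻¹·d, a·x⁻¹·d). -/
import Mathlib

/-- The braid-group generators of the matrix chain satisfy the braid relation:
with fixed neighbours `a` and `d`, the maps `F (x, y) = (a * x⁻¹ * y, y)` and
`H (x, y) = (x, x * y⁻¹ * d)` satisfy `F ∘ H ∘ F = H ∘ F ∘ H`, and both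
composites send `(x, y)` to `(a * y⁻¹ * d, a * x⁻¹ * d)`. -/
theorem braid_relation {G : Type*} [Group G] (a d : G) :
    let F : G × G → G × G := fun p => (a * p.1⁻¹ * p.2, p.2)
    let H : G × G → G × G := fun p => (p.1, p.1 * p.2⁻¹ * d)
    F ∘ H ∘ F = H ∘ F ∘ H ∧
      ∀ x y : G, (F ∘ H ∘ F) (x, y) = (a * y⁻¹ * d, a * x⁻¹ * d) ∧
        (H ∘ F ∘ H) (x, y) = (a * y⁻¹ * d, a * x⁻¹ * d) := by
  intro F H
  have key : ∀ x y : G, (F ∘ H ∘ F) (x, y) = (a * y⁻¹ * d, a * x⁻¹ * d) ∧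
      (H ∘ F ∘ H) (x, y) = (a * y⁻¹ * d, a * x⁻¹ * d) := by
    intro x y
    constructor <;> simp [F, H, Function.comp, mul_assoc] <;> group
  refine ⟨funext fun p => ?_, key⟩
  rw [(key p.1 p.2).1, (key p.1 p.2).2]
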